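/- arXiv:2404.05451 — 2 statements merged into one kernel-verified Lean document; each statement's English description precedes it below -/
import Mathlib

section
/- Let d ≥ 1, let γ ∈ ℝ^d have all coordinates γ_j > 0, and let α > 0. Then there exist constants C_1, C_2 > 0 (depending only on d, γ, α) such that for every integer l ≥ 2, C_1 · 2^{−αl} l^{d−1} ≤ Σ_{s ∈ ℕ^d, (s,γ) ≥ l} 2^{−α(s,γ)} ≤ C_2 · 2^{−αl} l^{d−1}. -/
/-!
Write `q = 2^{-α}`, `W(s) = (s,γ)` and `S_d(l)` for the tail sum. Splitting off the first
coordinate, `s = (n, s')`, the sum over `n` is a geometric tail of size `≍ q ^ max l W(s')`.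
Hence `S_{d+1}(l) ≲ q^l · #{s' : W(s') < l} + S_d(l)`, and the points with `W(s') < l` lie in a
box with `O(l^d)` points, so the upper bound follows by induction on `d`. For the lower bound,
every `s'` in the box `[1, ⌈l/Γ⌉]^d`, `Γ = Σ γ_j`, extends by a suitable `n` to a point with
`l ≤ W(s) ≤ l + Γ`: this gives `⌈l/Γ⌉^d` terms, each at least `q^{l+Γ}`.
-/

open Finset

namespace LatticeTail

variable {d : ℕ} {q : ℝ}

def weight (γ : Fin d → ℝ) (s : Fin d → ℕ) : ℝ := ∑ j, (s j : ℝ) * γ j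

def tailSet (γ : Fin d → ℝ) (l : ℝ) : Set (Fin d → ℕ) :=
  {s | (∀ j, 1 ≤ s j) ∧ l ≤ weight γ s}

noncomputable def tailTerm (q : ℝ) (γ : Fin d → ℝ) (l : ℝ) : (Fin d → ℕ) → ℝ :=
  (tailSet γ l).indicator fun s => q ^ weight γ s

lemma weight_cons (γ : Fin (d + 1) → ℝ) (n : ℕ) (s : Fin d → ℕ) :
    weight γ (Fin.cons n s) = n * γ 0 + weight (Fin.tail γ) s := by
  simp [weight, Fin.sum_univ_succ, Fin.tail]

lemma cons_mem_tailSet {γ : Fin (d + 1) → ℝ} {l : ℝ} {n : ℕ} {s : Fin d → ℕ} :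
    Fin.cons n s ∈ tailSet γ l ↔
      1 ≤ n ∧ (∀ j, 1 ≤ s j) ∧ l ≤ n * γ 0 + weight (Fin.tail γ) s := by
  simp [tailSet, Fin.forall_fin_succ, weight_cons, and_assoc]

lemma mul_le_weight {γ : Fin d → ℝ} (hγ : ∀ j, 0 ≤ γ j) (s : Fin d → ℕ) (j : Fin d) :
    (s j : ℝ) * γ j ≤ weight γ s :=
  single_le_sum (f := fun i => (s i : ℝ) * γ i) (fun i _ => by have := hγ i; positivity)
    (mem_univ j)

lemma weight_le_of_le {γ : Fin d → ℝ} (hγ : ∀ j, 0 ≤ γ j) {s : Fin d → ℕ} {m : ℕ}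
    (hs : ∀ j, s j ≤ m) : weight γ s ≤ m * ∑ j, γ j := by
  rw [mul_sum]
  exact sum_le_sum fun j _ => mul_le_mul_of_nonneg_right (by exact_mod_cast hs j) (hγ j)

lemma rpow_nat_mul_add (hq : 0 < q) (n : ℕ) (c T : ℝ) :
    q ^ (n * c + T) = (q ^ c) ^ n * q ^ T := by
  rw [Real.rpow_add hq, mul_comm (n : ℝ) c, Real.rpow_mul hq.le, Real.rpow_natCast]

lemma tailTerm_nonneg (hq : 0 < q) (γ : Fin d → ℝ) (l : ℝ) (s : Fin d → ℕ) :
    0 ≤ tailTerm q γ l s :=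
  Set.indicator_nonneg (fun _ _ => (Real.rpow_pos_of_pos hq _).le) s

lemma summable_rpow_weight (hq0 : 0 < q) (hq1 : q < 1) :
    ∀ {d : ℕ} (γ : Fin d → ℝ), (∀ j, 0 < γ j) →
      Summable fun s : Fin d → ℕ => q ^ weight γ s
  | 0, _, _ => .of_finite
  | d + 1, γ, hγ => by
    rw [← (Fin.consEquiv fun _ => ℕ).summable_iff]
    have hr0 : 0 ≤ q ^ γ 0 := (Real.rpow_pos_of_pos hq0 _).le
    have hr1 : q ^ γ 0 < 1 := Real.rpow_lt_one hq0.le hq1 (hγ 0)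
    convert (summable_geometric_of_lt_one hr0 hr1).mul_of_nonneg
      (summable_rpow_weight hq0 hq1 (Fin.tail γ) fun j => hγ _)
      (fun n => pow_nonneg hr0 n) (fun s => (Real.rpow_pos_of_pos hq0 _).le) using 2 with p
    simp [Fin.consEquiv, weight_cons, rpow_nat_mul_add hq0]

lemma summable_tailTerm (hq0 : 0 < q) (hq1 : q < 1) {γ : Fin d → ℝ} (hγ : ∀ j, 0 < γ j)
    (l : ℝ) : Summable (tailTerm q γ l) :=
  (summable_rpow_weight hq0 hq1 γ hγ).of_nonneg_of_le (tailTerm_nonneg hq0 γ l)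
    (Set.indicator_le_self' fun _ _ => (Real.rpow_pos_of_pos hq0 _).le)

lemma tsum_le_of_le_ite_rpow (hq0 : 0 < q) (hq1 : q < 1) {c : ℝ} (hc : 0 < c) {l T : ℝ}
    {f : ℕ → ℝ} (hf0 : ∀ n, 0 ≤ f n)
    (hf : ∀ n : ℕ, f n ≤ if l ≤ n * c + T then q ^ (n * c + T) else 0) :
    ∑' n, f n ≤ q ^ max l T / (1 - q ^ c) := by
  set n₀ := ⌈(l - T) / c⌉₊
  have hr0 : 0 ≤ q ^ c := (Real.rpow_pos_of_pos hq0 _).le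
  have hr1 : q ^ c < 1 := Real.rpow_lt_one hq0.le hq1 hc
  have hzero : ∀ n < n₀, f n = 0 := fun n hn => by
    have : (n : ℝ) * c + T < l := by
      have := (Nat.lt_ceil.mp hn)
      rw [lt_div_iff₀ hc] at this
      linarith
    exact le_antisymm ((hf n).trans_eq (if_neg this.not_ge)) (hf0 n)
  have hshift : ∑' i, f (i + n₀) = ∑' n, f n := by
    refine (add_left_injective n₀).tsum_eq fun n hn => ⟨n - n₀, Nat.sub_add_cancel ?_⟩
    by_contra h
    exact hn (hzero n (not_le.mp h))
  have hexp : max l T ≤ n₀ * c + T := by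
    have := Nat.le_ceil ((l - T) / c)
    rw [div_le_iff₀ hc] at this
    exact max_le (by linarith) (by nlinarith [(Nat.cast_nonneg n₀ : (0 : ℝ) ≤ n₀)])
  have hbound : ∀ i, f (i + n₀) ≤ q ^ max l T * (q ^ c) ^ i := fun i => by
    refine (hf _).trans ?_
    split_ifs
    · rw [show ((i + n₀ : ℕ) : ℝ) * c + T = i * c + (n₀ * c + T) by push_cast; ring,
        rpow_nat_mul_add hq0]
      exact (mul_comm _ _).trans_le (mul_le_mul_of_nonneg_right
        (Real.rpow_le_rpow_of_exponent_ge hq0 hq1.le hexp) (pow_nonneg hr0 i))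
    · have := Real.rpow_pos_of_pos hq0 (max l T)
      positivity
  have hgeom := (summable_geometric_of_lt_one hr0 hr1).mul_left (q ^ max l T)
  calc ∑' n, f n = ∑' i, f (i + n₀) := hshift.symm
    _ ≤ ∑' i, q ^ max l T * (q ^ c) ^ i :=
      (hgeom.of_nonneg_of_le (fun i => hf0 _) hbound).tsum_le_tsum hbound hgeom
    _ = q ^ max l T / (1 - q ^ c) := by
      rw [tsum_mul_left, tsum_geometric_of_lt_one hr0 hr1, div_eq_mul_inv]

lemma exists_nat_mul_between {c : ℝ} (hc : 0 < c) (a : ℝ) :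
    ∃ n : ℕ, 1 ≤ n ∧ a ≤ n * c ∧ n * c ≤ max a 0 + c := by
  rcases le_or_gt a c with hac | hac
  · exact ⟨1, le_rfl, by simpa using hac, by simp⟩
  · have hpos : 0 < a / c := div_pos (hc.trans hac) hc
    refine ⟨⌈a / c⌉₊, Nat.one_le_iff_ne_zero.mpr (Nat.ceil_pos.mpr hpos).ne', ?_, ?_⟩
    · exact (div_le_iff₀ hc).mp (Nat.le_ceil _)
    · calc (⌈a / c⌉₊ : ℝ) * c ≤ (a / c + 1) * c := by
            gcongr; exact (Nat.ceil_lt_add_one hpos.le).le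
        _ = a + c := by field_simp
        _ ≤ max a 0 + c := by gcongr; exact le_max_left a 0

lemma exists_finset_weight_lt {γ : Fin d → ℝ} (hγ : ∀ j, 0 < γ j) :
    ∃ K ≥ (0 : ℝ), ∀ l : ℝ, 1 ≤ l → ∃ B : Finset (Fin d → ℕ),
      (∀ s, weight γ s < l → s ∈ B) ∧ (B.card : ℝ) ≤ K * l ^ d := by
  set M := ∑ j, (γ j)⁻¹
  have hM : 0 ≤ M := sum_nonneg fun j _ => (inv_pos.mpr (hγ j)).le
  refine ⟨(M + 1) ^ d, by positivity, fun l hl => ?_⟩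
  refine ⟨Fintype.piFinset fun _ => range (⌊l * M⌋₊ + 1), fun s hs => ?_, ?_⟩
  · refine Fintype.mem_piFinset.mpr fun j =>
      mem_range.mpr (Nat.lt_succ_of_le (Nat.le_floor ?_))
    have hsj : (s j : ℝ) * γ j < l := (mul_le_weight (fun i => (hγ i).le) s j).trans_lt hs
    have hinv : (γ j)⁻¹ ≤ M :=
      single_le_sum (f := fun i => (γ i)⁻¹) (fun i _ => (inv_pos.mpr (hγ i)).le) (mem_univ j)
    calc (s j : ℝ) = (s j : ℝ) * γ j * (γ j)⁻¹ := by field_simp [(hγ j).ne']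
      _ ≤ l * M := mul_le_mul hsj.le hinv (inv_pos.mpr (hγ j)).le (by linarith)
  · rw [Fintype.card_piFinset_const, card_range, Nat.cast_pow, ← mul_pow]
    gcongr
    push_cast
    nlinarith [Nat.floor_le (by positivity : 0 ≤ l * M)]

section Cons

variable {γ : Fin (d + 1) → ℝ} {l : ℝ}

lemma tsum_tailTerm_cons_le (hq0 : 0 < q) (hq1 : q < 1) (hγ : ∀ j, 0 < γ j)
    {B : Finset (Fin d → ℕ)} (hB : ∀ s, weight (Fin.tail γ) s < l → s ∈ B)
    (s : Fin d → ℕ) :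
    ∑' n, tailTerm q γ l (Fin.cons n s) ≤
      (1 - q ^ γ 0)⁻¹ * ((if s ∈ B then q ^ l else 0) + tailTerm q (Fin.tail γ) l s) := by
  have hr1 : q ^ γ 0 < 1 := Real.rpow_lt_one hq0.le hq1 (hγ 0)
  have hB0 : 0 ≤ if s ∈ B then q ^ l else 0 := by
    split_ifs <;> [exact (Real.rpow_pos_of_pos hq0 l).le; exact le_rfl]
  by_cases hs : ∀ j, 1 ≤ s j
  swap
  · have hzero : ∀ n : ℕ, tailTerm q γ l (Fin.cons n s) = 0 := fun n =>
      Set.indicator_of_notMem (fun h => hs (cons_mem_tailSet.mp h).2.1) _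
    simp only [hzero, tsum_zero]
    have := tailTerm_nonneg hq0 (Fin.tail γ) l s
    have := inv_pos.mpr (sub_pos.mpr hr1)
    positivity
  set W := weight (Fin.tail γ) s
  have hfiber : ∑' n, tailTerm q γ l (Fin.cons n s) ≤ q ^ max l W / (1 - q ^ γ 0) := by
    refine tsum_le_of_le_ite_rpow hq0 hq1 (hγ 0) (fun n => tailTerm_nonneg hq0 γ l _)
      fun n => ?_
    by_cases h : Fin.cons n s ∈ tailSet γ l
    · rw [tailTerm, Set.indicator_of_mem h, weight_cons, if_pos (cons_mem_tailSet.mp h).2.2]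
    · rw [tailTerm, Set.indicator_of_notMem h]
      split_ifs <;> [exact (Real.rpow_pos_of_pos hq0 _).le; exact le_rfl]
  have hmax : q ^ max l W ≤ (if s ∈ B then q ^ l else 0) + tailTerm q (Fin.tail γ) l s := by
    rcases lt_or_ge W l with hW | hW
    · rw [max_eq_left hW.le, if_pos (hB s hW)]
      exact le_add_of_nonneg_right (tailTerm_nonneg hq0 _ l s)
    · have hmem : s ∈ tailSet (Fin.tail γ) l := ⟨hs, hW⟩
      rw [max_eq_right hW, tailTerm, Set.indicator_of_mem hmem]
      exact le_add_of_nonneg_left hB0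
  rw [div_eq_inv_mul] at hfiber
  exact hfiber.trans (mul_le_mul_of_nonneg_left hmax (inv_nonneg.mpr (sub_pos.mpr hr1).le))

lemma tsum_tailTerm_succ_le (hq0 : 0 < q) (hq1 : q < 1) (hγ : ∀ j, 0 < γ j)
    {B : Finset (Fin d → ℕ)} (hB : ∀ s, weight (Fin.tail γ) s < l → s ∈ B) :
    ∑' s, tailTerm q γ l s ≤
      (1 - q ^ γ 0)⁻¹ * (B.card * q ^ l + ∑' s, tailTerm q (Fin.tail γ) l s) := by
  let e : (Fin d → ℕ) × ℕ ≃ (Fin (d + 1) → ℕ) :=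
    (Equiv.prodComm _ _).trans (Fin.consEquiv fun _ => ℕ)
  have hsum := (summable_tailTerm hq0 hq1 hγ l).comp_injective e.injective
  have hbox : Summable fun s : Fin d → ℕ => if s ∈ B then q ^ l else 0 :=
    summable_of_ne_finset_zero fun s hs => if_neg hs
  have htail := summable_tailTerm (γ := Fin.tail γ) hq0 hq1 (fun j => hγ _) l
  calc ∑' s, tailTerm q γ l s = ∑' s, ∑' n, tailTerm q γ l (Fin.cons n s) := by
        rw [← e.tsum_eq]; exact hsum.tsum_prod
    _ ≤ ∑' s, (1 - q ^ γ 0)⁻¹ *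
          ((if s ∈ B then q ^ l else 0) + tailTerm q (Fin.tail γ) l s) :=
        hsum.prod.tsum_le_tsum (tsum_tailTerm_cons_le hq0 hq1 hγ hB)
          ((hbox.add htail).mul_left _)
    _ = _ := by
        rw [tsum_mul_left, hbox.tsum_add htail, tsum_eq_sum fun s hs => if_neg hs,
          sum_ite_mem, inter_self, sum_const, nsmul_eq_mul]

end Cons

theorem exists_tsum_tailTerm_le (hq0 : 0 < q) (hq1 : q < 1) :
    ∀ {d : ℕ} (γ : Fin d → ℝ), (∀ j, 0 < γ j) →
      ∃ C > 0, ∀ l : ℝ, 1 ≤ l → ∑' s, tailTerm q γ l s ≤ C * l ^ (d - 1) * q ^ l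
  | 0, γ, _ => by
    refine ⟨1, one_pos, fun l hl => ?_⟩
    have hzero : ∀ s, tailTerm q γ l s = 0 := fun s =>
      Set.indicator_of_notMem (fun h => by have := h.2; simp [weight] at this; linarith) _
    simp only [hzero, tsum_zero]
    have := Real.rpow_pos_of_pos hq0 l
    positivity
  | d + 1, γ, hγ => by
    obtain ⟨C, hC, hCbound⟩ := exists_tsum_tailTerm_le hq0 hq1 (Fin.tail γ) fun j => hγ _
    obtain ⟨K, hK, hKbound⟩ := exists_finset_weight_lt fun j => hγ (Fin.succ j)
    have hr := inv_pos.mpr (sub_pos.mpr (Real.rpow_lt_one hq0.le hq1 (hγ 0)))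
    refine ⟨(1 - q ^ γ 0)⁻¹ * (K + C), by positivity, fun l hl => ?_⟩
    obtain ⟨B, hB, hcard⟩ := hKbound l hl
    have hql := (Real.rpow_pos_of_pos hq0 l).le
    calc ∑' s, tailTerm q γ l s
        ≤ (1 - q ^ γ 0)⁻¹ * (B.card * q ^ l + ∑' s, tailTerm q (Fin.tail γ) l s) :=
          tsum_tailTerm_succ_le hq0 hq1 hγ hB
      _ ≤ (1 - q ^ γ 0)⁻¹ * (K * l ^ d * q ^ l + C * l ^ (d - 1) * q ^ l) := by
          gcongr
          exact hCbound l hl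
      _ ≤ (1 - q ^ γ 0)⁻¹ * (K * l ^ d * q ^ l + C * l ^ d * q ^ l) := by
          gcongr
          exact Nat.sub_le d 1
      _ = (1 - q ^ γ 0)⁻¹ * (K + C) * l ^ (d + 1 - 1) * q ^ l := by
          rw [Nat.add_sub_cancel]; ring

lemma exists_cons_mem_tailSet {γ : Fin (d + 1) → ℝ} (hγ : 0 < γ 0) {s : Fin d → ℕ}
    (hs : ∀ j, 1 ≤ s j) (l : ℝ) : ∃ n : ℕ, Fin.cons n s ∈ tailSet γ l ∧
      weight γ (Fin.cons n s) ≤ max l (weight (Fin.tail γ) s) + γ 0 := by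
  set W := weight (Fin.tail γ) s
  obtain ⟨n, hn1, hlo, hhi⟩ := exists_nat_mul_between hγ (l - W)
  refine ⟨n, cons_mem_tailSet.mpr ⟨hn1, hs, by linarith⟩, ?_⟩
  have : max (l - W) 0 = max l W - W := by rw [← max_sub_sub_right, sub_self]
  rw [weight_cons]
  linarith

theorem le_tsum_tailTerm (hq0 : 0 < q) (hq1 : q < 1) {γ : Fin (d + 1) → ℝ}
    (hγ : ∀ j, 0 < γ j) {l : ℝ} (hl : 0 ≤ l) :
    q ^ (∑ j, γ j) / (∑ j, γ j) ^ d * l ^ d * q ^ l ≤ ∑' s, tailTerm q γ l s := by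
  set Γ := ∑ j, γ j
  have hΓ : 0 < Γ := sum_pos (fun j _ => hγ j) univ_nonempty
  set m := ⌈l / Γ⌉₊
  set B := Fintype.piFinset fun _ : Fin d => Icc 1 m
  have hlift : ∀ s ∈ B, ∃ n : ℕ,
      Fin.cons n s ∈ tailSet γ l ∧ weight γ (Fin.cons n s) ≤ l + Γ := by
    intro s hs
    simp only [B, Fintype.mem_piFinset, mem_Icc] at hs
    obtain ⟨n, hmem, hle⟩ := exists_cons_mem_tailSet (hγ 0) (fun j => (hs j).1) l
    refine ⟨n, hmem, hle.trans ?_⟩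
    set Γ' := ∑ j, Fin.tail γ j
    have hΓ' : Γ = γ 0 + Γ' := Fin.sum_univ_succ γ
    have hW : weight (Fin.tail γ) s ≤ m * Γ' :=
      weight_le_of_le (fun j => (hγ _).le) fun j => (hs j).2
    have hΓ'0 : 0 ≤ Γ' := sum_nonneg fun j _ => (hγ _).le
    have hm : (m : ℝ) * Γ' ≤ l + Γ' := by
      have hlΓ : l / Γ * Γ' ≤ l := by
        rw [div_mul_eq_mul_div, div_le_iff₀ hΓ]
        exact mul_le_mul_of_nonneg_left (by linarith [hγ 0]) hl
      nlinarith [Nat.ceil_lt_add_one (div_nonneg hl hΓ.le)]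
    have : max l (weight (Fin.tail γ) s) ≤ l + Γ' := max_le (by linarith) (hW.trans hm)
    linarith
  choose! n hn using hlift
  have hinj : Set.InjOn (fun s => (Fin.cons (n s) s : Fin (d + 1) → ℕ)) B :=
    fun a _ b _ h => (Fin.cons_injective2 h).2
  calc q ^ Γ / Γ ^ d * l ^ d * q ^ l = (l / Γ) ^ d * q ^ (l + Γ) := by
        rw [div_pow, Real.rpow_add hq0]; ring
    _ ≤ (m : ℝ) ^ d * q ^ (l + Γ) := by gcongr; exact Nat.le_ceil _
    _ = ∑ s ∈ B, q ^ (l + Γ) := by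
        rw [sum_const, Fintype.card_piFinset_const, Nat.card_Icc, nsmul_eq_mul]
        push_cast; ring
    _ ≤ ∑ s ∈ B, tailTerm q γ l (Fin.cons (n s) s) := sum_le_sum fun s hs => by
        rw [tailTerm, Set.indicator_of_mem (hn s hs).1]
        exact Real.rpow_le_rpow_of_exponent_ge hq0 hq1.le (hn s hs).2
    _ = ∑ s ∈ B.image (fun s => (Fin.cons (n s) s : Fin (d + 1) → ℕ)), tailTerm q γ l s :=
        (sum_image hinj).symm
    _ ≤ ∑' s, tailTerm q γ l s :=
        (summable_tailTerm hq0 hq1 hγ l).sum_le_tsum _ fun s _ => tailTerm_nonneg hq0 γ l s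

end LatticeTail

open LatticeTail

/-- **Lemma A, part 1.** For `γ ∈ ℝ^d` with positive coordinates and `α > 0`, there are
constants `C₁, C₂ > 0` such that for all integers `l ≥ 2`,
`C₁ · 2^{-αl} l^{d-1} ≤ Σ_{s ∈ ℕ^d, (s,γ) ≥ l} 2^{-α(s,γ)} ≤ C₂ · 2^{-αl} l^{d-1}`. -/
theorem statement0 (d : ℕ) (hd : 1 ≤ d) (γ : Fin d → ℝ) (hγ : ∀ j, 0 < γ j)
    (α : ℝ) (hα : 0 < α) :
    ∃ C₁ C₂ : ℝ, 0 < C₁ ∧ 0 < C₂ ∧ ∀ l : ℕ, 2 ≤ l →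
      C₁ * (2 : ℝ) ^ (-(α * (l : ℝ))) * (l : ℝ) ^ (d - 1) ≤
        (∑' s : {s : Fin d → ℕ // (∀ j, 1 ≤ s j) ∧ (l : ℝ) ≤ ∑ j, (s j : ℝ) * γ j},
          (2 : ℝ) ^ (-(α * ∑ j, (s.1 j : ℝ) * γ j))) ∧
      (∑' s : {s : Fin d → ℕ // (∀ j, 1 ≤ s j) ∧ (l : ℝ) ≤ ∑ j, (s j : ℝ) * γ j},
          (2 : ℝ) ^ (-(α * ∑ j, (s.1 j : ℝ) * γ j))) ≤
        C₂ * (2 : ℝ) ^ (-(α * (l : ℝ))) * (l : ℝ) ^ (d - 1) := by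
  obtain ⟨d, rfl⟩ : ∃ d', d = d' + 1 := ⟨d - 1, by omega⟩
  set q : ℝ := 2 ^ (-α)
  have hq0 : 0 < q := by positivity
  have hq1 : q < 1 := Real.rpow_lt_one_of_one_lt_of_neg one_lt_two (neg_neg_of_pos hα)
  have hpow : ∀ t : ℝ, (2 : ℝ) ^ (-(α * t)) = q ^ t := fun t => by
    rw [← Real.rpow_mul zero_le_two, neg_mul]
  have hΓ : 0 < ∑ j, γ j := sum_pos (fun j _ => hγ j) univ_nonempty
  obtain ⟨C, hC, hCbound⟩ := exists_tsum_tailTerm_le hq0 hq1 γ hγ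
  refine ⟨q ^ (∑ j, γ j) / (∑ j, γ j) ^ d, C, by positivity, hC, fun l hl => ?_⟩
  have hsum : ∑' s : tailSet γ l, q ^ weight γ s = ∑' s, tailTerm q γ l s :=
    _root_.tsum_subtype (tailSet γ l) fun s => q ^ weight γ s
  have hlower := le_tsum_tailTerm hq0 hq1 hγ (Nat.cast_nonneg (α := ℝ) l)
  have hupper := hCbound l (by exact_mod_cast (by omega : 1 ≤ l))
  simp only [hpow, Nat.add_sub_cancel] at hupper ⊢
  exact ⟨le_of_le_of_eq (by linarith) hsum.symm, le_of_eq_of_le hsum (by linarith)⟩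
end

section
/- Let d ≥ 1, let γ ∈ ℝ^d satisfy γ_1 = … = γ_ν = 1 and γ_j > 1 for j = ν+1,…,d (1 ≤ ν ≤ d), and let γ' ∈ ℝ^d satisfy γ'_j = 1 for j = 1,…,ν and 1 < γ'_j < γ_j for j = ν+1,…,d. Then for every α > 0 there exist constants C_1, C_2 > 0 (depending only on d, γ, γ', α) such that for every integer l ≥ 2, C_1 · 2^{−αl} l^{ν−1} ≤ Σ_{s ∈ ℕ^d, (s,γ') ≥ l} 2^{−α(s,γ)} ≤ C_2 · 2^{−αl} l^{ν−1}. -/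
/-!
Put `x = 2^{-α} < 1` and split `s = (u, t)` into the block `u ∈ ℕ^ν` where `γ = γ' = 1` and the
block `t ∈ ℕ^{d-ν}` where `γ' < γ`. Summing over `u` first, the sum becomes
`∑_t x^{(t,γ)} H(l - (t,γ'))` with `H(c) = ∑_{|u| ≥ c} x^{|u|}` over positive `u ∈ ℕ^ν`.
Since a positive `u` with `|u| = m` is determined by `m` and `u_2, …, u_ν ∈ [1, m]`,
`H(c) ≲ ∑_{m ≥ c} m^{ν-1} x^m ≲ x^c l^{ν-1}` for `c ≤ l`, and the remaining factor
`∑_t x^{(t, γ - γ')}` converges because `γ - γ' > 0` on the second block. Conversely the single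
term `t = (1, …, 1)` already contains about `(l/ν)^{ν-1}` tuples `u` with `|u| = l + ν - 1`.
-/

open Finset
open scoped ENNReal

section Geometric

variable {x : ℝ≥0∞}

theorem tsum_add_one_pow_mul_pow_ne_top (hx : x < 1) (p : ℕ) :
    ∑' i : ℕ, ((i : ℝ≥0∞) + 1) ^ p * x ^ i ≠ ⊤ := by
  set r := x.toReal
  have hr : ‖r‖ < 1 := by
    rw [Real.norm_of_nonneg ENNReal.toReal_nonneg]
    exact ENNReal.toReal_lt_of_lt_ofReal (by simpa using hx)
  have hsum : Summable fun i : ℕ => ((i : ℝ) + 1) ^ p * r ^ i := by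
    refine Summable.of_nonneg_of_le (fun i => by positivity) (fun i => ?_)
      (summable_descFactorial_mul_geometric_of_norm_lt_one p hr)
    have h := Nat.pow_sub_le_descFactorial (i + p) p
    rw [show i + p + 1 - p = i + 1 by omega] at h
    gcongr
    exact_mod_cast h
  have hofReal (i : ℕ) :
      ((i : ℝ≥0∞) + 1) ^ p * x ^ i = ENNReal.ofReal (((i : ℝ) + 1) ^ p * r ^ i) := by
    rw [ENNReal.ofReal_mul (by positivity), ENNReal.ofReal_pow (by positivity),
      ENNReal.ofReal_pow ENNReal.toReal_nonneg, ENNReal.ofReal_toReal hx.ne_top]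
    norm_cast
  simp_rw [hofReal]
  rw [← ENNReal.ofReal_tsum_of_nonneg (fun i => by positivity) hsum]
  exact ENNReal.ofReal_ne_top

theorem tsum_ite_natCast_pow_mul_pow_le (hx : x ≤ 1) (p : ℕ) {c : ℝ} {L : ℕ} (hcL : c ≤ L)
    (hL : 1 ≤ L) :
    ∑' m : ℕ, (if c ≤ m then (m : ℝ≥0∞) ^ p * x ^ m else 0)
      ≤ (∑' i : ℕ, ((i : ℝ≥0∞) + 1) ^ p * x ^ i) * x ^ c * (L : ℝ≥0∞) ^ p := by
  set N := ⌈c⌉₊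
  have hsupp : Function.support (fun m : ℕ => if c ≤ m then (m : ℝ≥0∞) ^ p * x ^ m else 0)
      ⊆ Set.range (· + N) := by
    intro m hm
    have : N ≤ m := Nat.ceil_le.mpr (by by_contra h; simp [h] at hm)
    exact ⟨m - N, Nat.sub_add_cancel this⟩
  rw [← (add_left_injective N).tsum_eq hsupp, mul_assoc, ← ENNReal.tsum_mul_right]
  refine ENNReal.tsum_le_tsum fun i => ?_
  split_ifs
  · have hNL : N ≤ L := Nat.ceil_le.mpr hcL
    have hbase : ((i + N : ℕ) : ℝ≥0∞) ≤ ((i : ℝ≥0∞) + 1) * L := by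
      norm_cast
      nlinarith
    have hpow : x ^ (i + N) ≤ x ^ i * x ^ c := by
      rw [pow_add, ← ENNReal.rpow_natCast x N]
      exact mul_le_mul_right (ENNReal.rpow_le_rpow_of_exponent_ge hx (Nat.le_ceil c)) _
    calc ((i + N : ℕ) : ℝ≥0∞) ^ p * x ^ (i + N)
        ≤ (((i : ℝ≥0∞) + 1) * L) ^ p * (x ^ i * x ^ c) := by gcongr
      _ = ((i : ℝ≥0∞) + 1) ^ p * x ^ i * (x ^ c * (L : ℝ≥0∞) ^ p) := by rw [mul_pow]; ring
  · exact zero_le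

theorem tsum_rpow_sum_mul_ne_top (hx : x < 1) :
    ∀ {k : ℕ} (δ : Fin k → ℝ), (∀ j, 0 < δ j) →
      ∑' t : Fin k → ℕ, x ^ (∑ j, (t j : ℝ) * δ j) ≠ ⊤
  | 0, δ, _ => by simp
  | k + 1, δ, hδ => by
    have hsplit (p : ℕ × (Fin k → ℕ)) :
        x ^ (∑ j, ((Fin.consEquiv fun _ => ℕ) p j : ℝ) * δ j)
          = (x ^ δ 0) ^ p.1 * x ^ (∑ j, (p.2 j : ℝ) * δ j.succ) := by
      obtain ⟨m, t⟩ := p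
      rw [Fin.sum_univ_succ, ENNReal.rpow_add_of_nonneg _ _ (by have := hδ 0; positivity)
        (sum_nonneg fun j _ => by have := hδ j.succ; positivity)]
      simp [mul_comm (m : ℝ), ENNReal.rpow_mul, ENNReal.rpow_natCast]
    rw [← (Fin.consEquiv fun _ => ℕ).tsum_eq]
    simp only [hsplit]
    rw [ENNReal.tsum_prod']
    simp only [ENNReal.tsum_mul_left, ENNReal.tsum_mul_right, ENNReal.tsum_geometric]
    refine ENNReal.mul_ne_top (ENNReal.inv_ne_top.mpr ?_)
      (tsum_rpow_sum_mul_ne_top hx _ fun j => hδ _)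
    exact (tsub_pos_of_lt (ENNReal.rpow_lt_one hx (hδ 0))).ne'

end Geometric

noncomputable def levelTailSum (x : ℝ≥0∞) (ν : ℕ) (c : ℝ) : ℝ≥0∞ :=
  ∑' u : Fin ν → ℕ, if (∀ j, 1 ≤ u j) ∧ c ≤ (∑ j, u j : ℕ) then x ^ (∑ j, u j) else 0

theorem levelTailSum_antitone (x : ℝ≥0∞) (ν : ℕ) : Antitone (levelTailSum x ν) := by
  intro c c' hc
  refine ENNReal.tsum_le_tsum fun u => ?_
  by_cases h : (∀ j, 1 ≤ u j) ∧ c' ≤ (∑ j, u j : ℕ)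
  · rw [if_pos h, if_pos ⟨h.1, hc.trans h.2⟩]
  · rw [if_neg h]
    exact zero_le

theorem tsum_ite_mem_piFinset_Icc (n m : ℕ) :
    ∑' w : Fin n → ℕ, (if w ∈ Fintype.piFinset fun _ => Icc 1 m then 1 else 0 : ℝ≥0∞)
      = (m : ℝ≥0∞) ^ n := by
  rw [tsum_eq_sum (s := Fintype.piFinset fun _ => Icc 1 m) fun w hw => if_neg hw,
    sum_boole, filter_mem_eq_inter, inter_self]
  simp

theorem levelTailSum_succ_le (x : ℝ≥0∞) (n : ℕ) (c : ℝ) :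
    levelTailSum x (n + 1) c ≤ ∑' m : ℕ, if c ≤ m then (m : ℝ≥0∞) ^ n * x ^ m else 0 := by
  set g : ℕ × (Fin n → ℕ) → ℝ≥0∞ := fun p =>
    (if c ≤ p.1 then x ^ p.1 else 0) * if p.2 ∈ Fintype.piFinset fun _ => Icc 1 p.1 then 1 else 0
  have hinj : Function.Injective fun u : Fin (n + 1) → ℕ => ((∑ j, u j, Fin.tail u) : ℕ × _) := by
    intro u v huv
    obtain ⟨hsum, htail⟩ := Prod.mk.inj huv
    have htailsum : ∑ i : Fin n, u i.succ = ∑ i : Fin n, v i.succ :=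
      congrArg (fun t => ∑ i, t i) htail
    rw [Fin.sum_univ_succ, Fin.sum_univ_succ] at hsum
    rw [← Fin.cons_self_tail u, ← Fin.cons_self_tail v, htail, show u 0 = v 0 by omega]
  calc levelTailSum x (n + 1) c ≤ ∑' u : Fin (n + 1) → ℕ, g (∑ j, u j, Fin.tail u) := by
        refine ENNReal.tsum_le_tsum fun u => ?_
        split_ifs with h
        · have hmem : Fin.tail u ∈ Fintype.piFinset fun _ => Icc 1 (∑ j, u j) :=
            Fintype.mem_piFinset.mpr fun i =>
              mem_Icc.mpr ⟨h.1 _, single_le_sum (fun j _ => Nat.zero_le (u j)) (mem_univ _)⟩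
          simp only [g]
          rw [if_pos h.2, if_pos hmem, mul_one]
        · exact zero_le
    _ ≤ ∑' p, g p := ENNReal.tsum_comp_le_tsum_of_injective hinj g
    _ = ∑' m : ℕ, if c ≤ m then (m : ℝ≥0∞) ^ n * x ^ m else 0 := by
        rw [ENNReal.tsum_prod']
        refine tsum_congr fun m => ?_
        simp only [g, ENNReal.tsum_mul_left, tsum_ite_mem_piFinset_Icc]
        split_ifs <;> simp [mul_comm]

theorem pow_mul_pow_le_levelTailSum (x : ℝ≥0∞) {n l q : ℕ} (hq : n * q < l + n) :
    (q : ℝ≥0∞) ^ n * x ^ (l + n) ≤ levelTailSum x (n + 1) l := by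
  -- the first coordinate tops the sum up to `l + n`; `hq` keeps it positive
  set f : (Fin n → ℕ) → Fin (n + 1) → ℕ := fun w => Fin.cons (l + n - ∑ i, w i) w
  have hinj : Function.Injective f := fun w v h => by simpa [f] using congrArg Fin.tail h
  rw [← tsum_ite_mem_piFinset_Icc, ← ENNReal.tsum_mul_right]
  refine (ENNReal.tsum_le_tsum fun w => ?_).trans (ENNReal.tsum_comp_le_tsum_of_injective hinj _)
  by_cases hw : w ∈ Fintype.piFinset fun _ => Icc 1 q
  · have hsum : ∑ i, w i ≤ n * q := by
      simpa using sum_le_card_nsmul univ w q fun i _ =>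
        (mem_Icc.mp (Fintype.mem_piFinset.mp hw i)).2
    have hfsum : ∑ j, f w j = l + n := by
      simp only [f, Fin.sum_univ_succ, Fin.cons_zero, Fin.cons_succ]
      omega
    have hpos : ∀ j, 1 ≤ f w j := Fin.cases (by simp [f]; omega)
      fun i => by simpa [f] using (mem_Icc.mp (Fintype.mem_piFinset.mp hw i)).1
    rw [if_pos hw, one_mul, if_pos ⟨hpos, by rw [hfsum]; push_cast; linarith⟩, hfsum]
  · rw [if_neg hw, zero_mul]
    exact zero_le

noncomputable def blockSum (x : ℝ≥0∞) (ν : ℕ) {k : ℕ} (a b : Fin k → ℝ) (c : ℝ) : ℝ≥0∞ :=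
  ∑' t : Fin k → ℕ, if ∀ j, 1 ≤ t j then
    x ^ (∑ j, (t j : ℝ) * b j) * levelTailSum x ν (c - ∑ j, (t j : ℝ) * a j) else 0

theorem tsum_fin_add_eq_blockSum {x : ℝ≥0∞} (hx0 : x ≠ 0) (hxtop : x ≠ ⊤) {ν k : ℕ}
    (γ γ' : Fin (ν + k) → ℝ) (hγ : ∀ i, γ (Fin.castAdd k i) = 1)
    (hγ' : ∀ i, γ' (Fin.castAdd k i) = 1) (c : ℝ) :
    ∑' s : Fin (ν + k) → ℕ,
        (if (∀ j, 1 ≤ s j) ∧ c ≤ ∑ j, (s j : ℝ) * γ' j then x ^ (∑ j, (s j : ℝ) * γ j) else 0)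
      = blockSum x ν (fun j => γ' (Fin.natAdd ν j)) (fun j => γ (Fin.natAdd ν j)) c := by
  rw [← (Fin.appendEquiv ν k).tsum_eq, ENNReal.tsum_prod', ENNReal.tsum_comm, blockSum]
  refine tsum_congr fun t => ?_
  split_ifs with ht
  · rw [levelTailSum, ← ENNReal.tsum_mul_left]
    refine tsum_congr fun u => ?_
    simp only [Fin.appendEquiv_apply, Fin.forall_fin_add, Fin.sum_univ_add, Fin.append_left,
      Fin.append_right, hγ, hγ', mul_one, ht, implies_true, and_true]
    push_cast
    simp only [sub_le_iff_le_add, mul_ite, mul_zero]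
    rw [ENNReal.rpow_add _ _ hx0 hxtop, ← Nat.cast_sum, ENNReal.rpow_natCast, mul_comm]
  · refine ENNReal.tsum_eq_zero.mpr fun u => if_neg fun h => ht fun j => ?_
    simpa using h.1 (Fin.natAdd ν j)

theorem exists_mul_lt_add_and_le_succ_mul (n : ℕ) {l : ℕ} (hl : 1 ≤ l) :
    ∃ q : ℕ, n * q < l + n ∧ l ≤ (n + 1) * q := by
  have hdiv := Nat.div_add_mod (l + n) (n + 1)
  have hmod := Nat.mod_lt (l + n) (by omega : 0 < n + 1)
  generalize (l + n) / (n + 1) = q at hdiv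
  generalize (l + n) % (n + 1) = r at hdiv hmod
  exact ⟨q, by nlinarith, by nlinarith⟩

section BlockSum

variable {x : ℝ≥0∞} {k : ℕ} (n : ℕ) (a b : Fin k → ℝ)

theorem exists_blockSum_le (hx0 : x ≠ 0) (hx1 : x < 1) (ha : ∀ j, 0 ≤ a j)
    (hab : ∀ j, a j < b j) :
    ∃ C : ℝ≥0∞, C ≠ ⊤ ∧ ∀ l : ℕ, 1 ≤ l →
      blockSum x (n + 1) a b l ≤ C * x ^ l * (l : ℝ≥0∞) ^ n := by
  set K := ∑' i : ℕ, ((i : ℝ≥0∞) + 1) ^ n * x ^ i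
  refine ⟨K * ∑' t : Fin k → ℕ, x ^ (∑ j, (t j : ℝ) * (b j - a j)),
    ENNReal.mul_ne_top (tsum_add_one_pow_mul_pow_ne_top hx1 n)
      (tsum_rpow_sum_mul_ne_top hx1 _ fun j => sub_pos.2 (hab j)), fun l hl => ?_⟩
  calc blockSum x (n + 1) a b l
      ≤ ∑' t : Fin k → ℕ, K * x ^ l * (l : ℝ≥0∞) ^ n * x ^ (∑ j, (t j : ℝ) * (b j - a j)) :=
        ENNReal.tsum_le_tsum fun t => ?_
    _ = _ := by rw [ENNReal.tsum_mul_left]; ring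
  split_ifs
  · set A := ∑ j, (t j : ℝ) * a j
    have hA : 0 ≤ A := sum_nonneg fun j _ => mul_nonneg (Nat.cast_nonneg _) (ha j)
    have hH : levelTailSum x (n + 1) (l - A) ≤ K * x ^ ((l : ℝ) - A) * (l : ℝ≥0∞) ^ n :=
      (levelTailSum_succ_le x n _).trans
        (tsum_ite_natCast_pow_mul_pow_le hx1.le n (by linarith) hl)
    have hexp : x ^ (∑ j, (t j : ℝ) * b j) * x ^ ((l : ℝ) - A)
        = x ^ l * x ^ (∑ j, (t j : ℝ) * (b j - a j)) := by
      rw [← ENNReal.rpow_natCast, ← ENNReal.rpow_add _ _ hx0 hx1.ne_top,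
        ← ENNReal.rpow_add _ _ hx0 hx1.ne_top]
      congr 1
      simp only [A, mul_sub, sum_sub_distrib]
      ring
    calc _ ≤ x ^ (∑ j, (t j : ℝ) * b j) * (K * x ^ ((l : ℝ) - A) * (l : ℝ≥0∞) ^ n) :=
          mul_le_mul_right hH _
      _ = K * (l : ℝ≥0∞) ^ n * (x ^ (∑ j, (t j : ℝ) * b j) * x ^ ((l : ℝ) - A)) := by ring
      _ = _ := by rw [hexp]; ring
  · exact zero_le

theorem exists_le_blockSum (hx0 : x ≠ 0) (hxtop : x ≠ ⊤) (ha : ∀ j, 0 ≤ a j) :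
    ∃ C : ℝ≥0∞, C ≠ 0 ∧ C ≠ ⊤ ∧ ∀ l : ℕ, 1 ≤ l →
      C * x ^ l * (l : ℝ≥0∞) ^ n ≤ blockSum x (n + 1) a b l := by
  have hB0 : x ^ (∑ j, b j) ≠ 0 := by simp [ENNReal.rpow_eq_zero_iff, hx0, hxtop]
  have hBtop : x ^ (∑ j, b j) ≠ ⊤ := by simp [ENNReal.rpow_eq_top_iff, hx0, hxtop]
  refine ⟨x ^ (∑ j, b j) * x ^ n / (n + 1 : ℝ≥0∞) ^ n, ?_, ?_, fun l hl => ?_⟩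
  · exact ENNReal.div_ne_zero.mpr ⟨mul_ne_zero hB0 (pow_ne_zero _ hx0), by simp⟩
  · exact ENNReal.div_ne_top (ENNReal.mul_ne_top hBtop (ENNReal.pow_ne_top hxtop)) (by simp)
  obtain ⟨q, hq, hlq⟩ := exists_mul_lt_add_and_le_succ_mul n hl
  have hcount : (l : ℝ≥0∞) ^ n / (n + 1 : ℝ≥0∞) ^ n ≤ (q : ℝ≥0∞) ^ n := by
    rw [ENNReal.div_le_iff (by simp) (by simp), ← mul_pow]
    gcongr
    exact_mod_cast (by linarith : l ≤ q * (n + 1))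
  calc x ^ (∑ j, b j) * x ^ n / (n + 1 : ℝ≥0∞) ^ n * x ^ l * (l : ℝ≥0∞) ^ n
      = x ^ (∑ j, b j) * ((l : ℝ≥0∞) ^ n / (n + 1 : ℝ≥0∞) ^ n * x ^ (l + n)) := by
        simp only [div_eq_mul_inv, pow_add]
        ring
    _ ≤ x ^ (∑ j, b j) * levelTailSum x (n + 1) l := by
        gcongr
        exact (mul_le_mul_left hcount _).trans (pow_mul_pow_le_levelTailSum x hq)
    _ ≤ x ^ (∑ j, ((1 : ℕ) : ℝ) * b j) *
          levelTailSum x (n + 1) (l - ∑ j, ((1 : ℕ) : ℝ) * a j) := by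
        simp only [Nat.cast_one, one_mul]
        gcongr
        exact levelTailSum_antitone x _ (by linarith [sum_nonneg fun j (_ : j ∈ univ) => ha j])
    _ ≤ blockSum x (n + 1) a b l := by
        refine le_of_eq_of_le ?_ (ENNReal.le_tsum fun _ => 1)
        rw [if_pos fun _ => le_rfl]

theorem exists_bounds_toReal_blockSum (hx0 : x ≠ 0) (hx1 : x < 1) (ha : ∀ j, 0 ≤ a j)
    (hab : ∀ j, a j < b j) :
    ∃ C₁ C₂ : ℝ, 0 < C₁ ∧ 0 < C₂ ∧ ∀ l : ℕ, 1 ≤ l →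
      C₁ * (x ^ l).toReal * (l : ℝ) ^ n ≤ (blockSum x (n + 1) a b l).toReal ∧
        (blockSum x (n + 1) a b l).toReal ≤ C₂ * (x ^ l).toReal * (l : ℝ) ^ n := by
  obtain ⟨C₁, hC₁0, hC₁top, hlower⟩ := exists_le_blockSum n a b hx0 hx1.ne_top ha
  obtain ⟨C₂, hC₂top, hupper⟩ := exists_blockSum_le n a b hx0 hx1 ha hab
  refine ⟨C₁.toReal, C₂.toReal + 1, ENNReal.toReal_pos hC₁0 hC₁top, by positivity,
    fun l hl => ?_⟩
  have hbound : C₂ * x ^ l * (l : ℝ≥0∞) ^ n ≠ ⊤ :=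
    ENNReal.mul_ne_top (ENNReal.mul_ne_top hC₂top (ENNReal.pow_ne_top hx1.ne_top))
      (ENNReal.pow_ne_top (ENNReal.natCast_ne_top l))
  constructor
  · simpa using ENNReal.toReal_mono (ne_top_of_le_ne_top hbound (hupper l hl)) (hlower l hl)
  · calc _ ≤ (C₂ * x ^ l * (l : ℝ≥0∞) ^ n).toReal := ENNReal.toReal_mono hbound (hupper l hl)
      _ ≤ (C₂.toReal + 1) * (x ^ l).toReal * (l : ℝ) ^ n := by
        simp only [ENNReal.toReal_mul, ENNReal.toReal_pow, ENNReal.toReal_natCast]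
        gcongr
        linarith

end BlockSum

theorem tsum_subtype_two_rpow_eq_toReal {ι : Type*} (P : ι → Prop) [DecidablePred P]
    (E : ι → ℝ) (α : ℝ) :
    ∑' s : {s // P s}, (2 : ℝ) ^ (-(α * E s))
      = (∑' s, if P s then ((2 : ℝ≥0∞) ^ (-α)) ^ E s else 0).toReal := by
  have hterm (r : ℝ) : (2 : ℝ) ^ (-(α * r)) = (((2 : ℝ≥0∞) ^ (-α)) ^ r).toReal := by
    rw [← ENNReal.rpow_mul, ← ENNReal.toReal_rpow, ENNReal.toReal_ofNat, neg_mul]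
  simp_rw [hterm]
  rw [← ENNReal.tsum_toReal_eq fun _ => ENNReal.rpow_ne_top_of_ne_zero (by simp) (by simp)]
  congr 1
  exact (tsum_subtype {s | P s} fun s => ((2 : ℝ≥0∞) ^ (-α)) ^ E s).trans
    (tsum_congr fun s => by simp [Set.indicator_apply])

theorem statement1_general (d : ℕ) (ν : ℕ) (hν1 : 1 ≤ ν) (hνd : ν ≤ d)
    (γ γ' : Fin d → ℝ)
    (hγhead : ∀ j : Fin d, (j : ℕ) < ν → γ j = 1)
    (hγ'head : ∀ j : Fin d, (j : ℕ) < ν → γ' j = 1)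
    (hγ'tail : ∀ j : Fin d, ν ≤ (j : ℕ) → 1 < γ' j ∧ γ' j < γ j)
    (α : ℝ) (hα : 0 < α) :
    ∃ C₁ C₂ : ℝ, 0 < C₁ ∧ 0 < C₂ ∧ ∀ l : ℕ, 2 ≤ l →
      C₁ * (2 : ℝ) ^ (-(α * (l : ℝ))) * (l : ℝ) ^ (ν - 1) ≤
        (∑' s : {s : Fin d → ℕ // (∀ j, 1 ≤ s j) ∧ (l : ℝ) ≤ ∑ j, (s j : ℝ) * γ' j},
          (2 : ℝ) ^ (-(α * ∑ j, (s.1 j : ℝ) * γ j))) ∧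
      (∑' s : {s : Fin d → ℕ // (∀ j, 1 ≤ s j) ∧ (l : ℝ) ≤ ∑ j, (s j : ℝ) * γ' j},
          (2 : ℝ) ^ (-(α * ∑ j, (s.1 j : ℝ) * γ j))) ≤
        C₂ * (2 : ℝ) ^ (-(α * (l : ℝ))) * (l : ℝ) ^ (ν - 1) := by
  obtain ⟨n, rfl⟩ : ∃ n, ν = n + 1 := ⟨ν - 1, by omega⟩
  obtain ⟨k, rfl⟩ : ∃ k, d = n + 1 + k := ⟨d - (n + 1), by omega⟩
  set x : ℝ≥0∞ := 2 ^ (-α)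
  have hx0 : x ≠ 0 := by simp [x, ENNReal.rpow_eq_zero_iff]
  have hx1 : x < 1 := ENNReal.rpow_lt_one_of_one_lt_of_neg (by norm_num) (by linarith)
  have htail (j : Fin k) := hγ'tail (Fin.natAdd (n + 1) j) (by simp)
  obtain ⟨C₁, C₂, hC₁, hC₂, hbounds⟩ := exists_bounds_toReal_blockSum n
    (fun j => γ' (Fin.natAdd (n + 1) j)) (fun j => γ (Fin.natAdd (n + 1) j)) hx0 hx1
    (fun j => zero_le_one.trans (htail j).1.le) fun j => (htail j).2
  refine ⟨C₁, C₂, hC₁, hC₂, fun l hl => ?_⟩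
  have hscale : (2 : ℝ) ^ (-(α * l)) = (x ^ l).toReal := by
    rw [ENNReal.toReal_pow, ← ENNReal.toReal_rpow, ENNReal.toReal_ofNat, ← neg_mul,
      Real.rpow_mul_natCast zero_le_two]
  rw [tsum_subtype_two_rpow_eq_toReal
      (fun s : Fin (n + 1 + k) → ℕ => (∀ j, 1 ≤ s j) ∧ (l : ℝ) ≤ ∑ j, (s j : ℝ) * γ' j)
      (fun s => ∑ j, (s j : ℝ) * γ j),
    tsum_fin_add_eq_blockSum hx0 hx1.ne_top γ γ' (fun i => hγhead _ i.isLt)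
      (fun i => hγ'head _ i.isLt),
    hscale, Nat.add_sub_cancel]
  exact hbounds l (by omega)

/-- **Lemma A, part 2.** With `γ_j = γ'_j = 1` for `j ≤ ν` and `1 < γ'_j < γ_j` for
`j > ν`, for every `α > 0` there are constants `C₁, C₂ > 0` such that for all `l ≥ 2`,
`C₁ · 2^{-αl} l^{ν-1} ≤ Σ_{s ∈ ℕ^d, (s,γ') ≥ l} 2^{-α(s,γ)} ≤ C₂ · 2^{-αl} l^{ν-1}`. -/
theorem statement1 (d : ℕ) (hd : 1 ≤ d) (ν : ℕ) (hν1 : 1 ≤ ν) (hνd : ν ≤ d)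
    (γ γ' : Fin d → ℝ)
    (hγhead : ∀ j : Fin d, (j : ℕ) < ν → γ j = 1)
    (hγtail : ∀ j : Fin d, ν ≤ (j : ℕ) → 1 < γ j)
    (hγ'head : ∀ j : Fin d, (j : ℕ) < ν → γ' j = 1)
    (hγ'tail : ∀ j : Fin d, ν ≤ (j : ℕ) → 1 < γ' j ∧ γ' j < γ j)
    (α : ℝ) (hα : 0 < α) :
    ∃ C₁ C₂ : ℝ, 0 < C₁ ∧ 0 < C₂ ∧ ∀ l : ℕ, 2 ≤ l →
      C₁ * (2 : ℝ) ^ (-(α * (l : ℝ))) * (l : ℝ) ^ (ν - 1) ≤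
        (∑' s : {s : Fin d → ℕ // (∀ j, 1 ≤ s j) ∧ (l : ℝ) ≤ ∑ j, (s j : ℝ) * γ' j},
          (2 : ℝ) ^ (-(α * ∑ j, (s.1 j : ℝ) * γ j))) ∧
      (∑' s : {s : Fin d → ℕ // (∀ j, 1 ≤ s j) ∧ (l : ℝ) ≤ ∑ j, (s j : ℝ) * γ' j},
          (2 : ℝ) ^ (-(α * ∑ j, (s.1 j : ℝ) * γ j))) ≤
        C₂ * (2 : ℝ) ^ (-(α * (l : ℝ))) * (l : ℝ) ^ (ν - 1) :=
  statement1_general d ν hν1 hνd γ γ' hγhead hγ'head hγ'tail α hα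
end
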